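/- arXiv:2109.08009 — 2 statements merged into one kernel-verified Lean document; each statement's English description precedes it below -/
import Mathlib

section
/- (Per-observation surrogate bound.) Let q ∈ {-1, 1} and let x, x₀ be real numbers. Define z₀ = x₀ + 4·q·(1 - π(q·x₀)), where π(u) = exp(u)/(exp(u)+1). Then -log(π(q·x)) ≤ -log(π(q·x₀)) + (1/8)·(x - z₀)². -/
/-!
The loss `u ↦ -log π(u)` has derivative `π(u) - 1` and second derivative `π(u)(1 - π(u)) ≤ 1/4`,
so it lies below its tangent at `q x₀` plus `(1/8)(u - q x₀)²`. Since `q² = 1`, this majoriser,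
read as a function of `x`, is `(1/8)(x - z₀)²` up to the constant `-2(1 - π(q x₀))²`: the working
response `z₀` is the point where the majoriser is minimal.
-/

noncomputable def logistic (x : ℝ) : ℝ := Real.exp x / (Real.exp x + 1)

open Real Set

theorem le_tangent_add_sq_of_deriv2_le {f f' f'' : ℝ → ℝ} {L : ℝ}
    (hf : ∀ t, HasDerivAt f (f' t) t) (hf' : ∀ t, HasDerivAt f' (f'' t) t)
    (hf'' : ∀ t, f'' t ≤ L) (x y : ℝ) :
    f y ≤ f x + f' x * (y - x) + L / 2 * (y - x) ^ 2 := by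
  set g : ℝ → ℝ := fun t ↦ f x + f' x * (t - x) + L / 2 * (t - x) ^ 2 - f t
  set g' : ℝ → ℝ := fun t ↦ f' x + L * (t - x) - f' t
  have hg (t : ℝ) : HasDerivAt g (g' t) t := by
    have := ((((hasDerivAt_id t).sub_const x).const_mul (f' x)).const_add (f x)).add
      ((((hasDerivAt_id t).sub_const x).pow 2).const_mul (L / 2)) |>.sub (hf t)
    exact this.congr_deriv (by simp only [g', id]; ring)
  have hg'_mono : Monotone g' := by
    refine monotone_of_hasDerivAt_nonneg (f' := fun t ↦ L - f'' t) (fun t ↦ ?_)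
      (fun t ↦ sub_nonneg.2 (hf'' t))
    have := (((hasDerivAt_id t).sub_const x).const_mul L).const_add (f' x) |>.sub (hf' t)
    exact this.congr_deriv (by simp)
  have hg'x : g' x = 0 := by simp [g']
  have hmin : IsMinOn g univ x := by
    refine isMinOn_univ_of_deriv (hg x).continuousAt
      (fun t _ ↦ (hg t).differentiableAt.differentiableWithinAt)
      (fun t _ ↦ (hg t).differentiableAt.differentiableWithinAt) (fun t ht ↦ ?_) (fun t ht ↦ ?_)
    · rw [(hg t).deriv, ← hg'x]; exact hg'_mono ht.le
    · rw [(hg t).deriv, ← hg'x]; exact hg'_mono ht.le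
  have hxy : g x ≤ g y := hmin (mem_univ y)
  simp only [g, sub_self, mul_zero, add_zero, ne_eq, OfNat.ofNat_ne_zero, not_false_eq_true,
    zero_pow] at hxy
  linarith

theorem logistic_eq_sigmoid : logistic = sigmoid := by
  ext u
  rw [logistic, sigmoid_def, exp_neg]
  field_simp

namespace Real

theorem sigmoid_mul_one_sub_sigmoid_le (u : ℝ) : sigmoid u * (1 - sigmoid u) ≤ 1 / 4 := by
  nlinarith [sq_nonneg (2 * sigmoid u - 1)]

theorem hasDerivAt_neg_log_sigmoid (u : ℝ) :
    HasDerivAt (fun t ↦ -log (sigmoid t)) (sigmoid u - 1) u := by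
  have := ((hasDerivAt_sigmoid u).log (sigmoid_pos u).ne').neg
  exact this.congr_deriv (by field_simp [(sigmoid_pos u).ne']; ring)

theorem neg_log_sigmoid_le (u₀ u : ℝ) :
    -log (sigmoid u) ≤
      -log (sigmoid u₀) + (sigmoid u₀ - 1) * (u - u₀) + 1 / 8 * (u - u₀) ^ 2 := by
  convert le_tangent_add_sq_of_deriv2_le hasDerivAt_neg_log_sigmoid
    (fun t ↦ (hasDerivAt_sigmoid t).sub_const 1) sigmoid_mul_one_sub_sigmoid_le u₀ u using 3
  norm_num

end Real

/-- Per-observation surrogate bound. For q ∈ {-1,1} and the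
working response z₀ = x₀ + 4q(1 - π(q x₀)),
we have -log(π(qx)) ≤ -log(π(qx₀)) + (1/8)(x - z₀)². -/
theorem per_observation_surrogate_bound (q x x₀ : ℝ) (hq : q = -1 ∨ q = 1) :
    -Real.log (logistic (q * x)) ≤
      -Real.log (logistic (q * x₀))
        + (1 / 8) * (x - (x₀ + 4 * q * (1 - logistic (q * x₀)))) ^ 2 := by
  have hq2 : q ^ 2 = 1 := by rcases hq with rfl | rfl <;> norm_num
  rw [logistic_eq_sigmoid]
  set p := sigmoid (q * x₀)
  have hsquare : (1 / 8) * (x - (x₀ + 4 * q * (1 - p))) ^ 2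
      = (p - 1) * (q * x - q * x₀) + 1 / 8 * (q * x - q * x₀) ^ 2 + 2 * (1 - p) ^ 2 := by
    linear_combination (2 * (1 - p) ^ 2 - (x - x₀) ^ 2 / 8) * hq2
  linarith [neg_log_sigmoid_le (q * x₀) (q * x), sq_nonneg (1 - p)]
end

section
/- (Tight per-observation surrogate bound.) Let q ∈ {-1, 1} and let x, x₀ be real numbers. Define z₀ = x₀ + 4·q·(1 - π(q·x₀)), where π(u) = exp(u)/(exp(u)+1). Then -log(π(q·x)) ≤ -log(π(q·x₀)) + (1/8)·((x - z₀)² - (x₀ - z₀)²), with equality when x = x₀. -/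
open Set

theorem ConvexOn.add_mul_sub_le_of_hasDerivAt {S : Set ℝ} {f : ℝ → ℝ} {f' x y : ℝ}
    (hfc : ConvexOn ℝ S f) (hx : x ∈ S) (hy : y ∈ S) (hf : HasDerivAt f f' x) :
    f x + f' * (y - x) ≤ f y := by
  rcases lt_trichotomy x y with hxy | rfl | hyx
  · have h := hfc.le_slope_of_hasDerivAt hx hy hxy hf
    rw [slope_def_field, le_div_iff₀ (sub_pos.2 hxy)] at h
    linarith
  · simp
  · have h := hfc.slope_le_of_hasDerivAt hy hx hyx hf
    rw [slope_def_field, div_le_iff₀ (sub_pos.2 hyx)] at h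
    linarith

theorem le_add_mul_sub_add_sq_of_monotone {f f' : ℝ → ℝ} {L : ℝ}
    (hf : ∀ u, HasDerivAt f (f' u) u) (hmono : Monotone fun u => L * u - f' u) (u u₀ : ℝ) :
    f u ≤ f u₀ + f' u₀ * (u - u₀) + L / 2 * (u - u₀) ^ 2 := by
  have hφ : ∀ v, HasDerivAt (fun v => L / 2 * v ^ 2 - f v) (L * v - f' v) v := fun v =>
    (((hasDerivAt_pow 2 v).const_mul (L / 2)).sub (hf v)).congr_deriv (by ring)
  have hconvex : ConvexOn ℝ univ fun v => L / 2 * v ^ 2 - f v :=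
    Monotone.convexOn_univ_of_deriv (fun v => (hφ v).differentiableAt)
      (by rwa [show deriv _ = _ from funext fun v => (hφ v).deriv])
  have := hconvex.add_mul_sub_le_of_hasDerivAt (mem_univ u₀) (mem_univ u) (hφ u₀)
  linarith

theorem logistic_pos (u : ℝ) : 0 < logistic u := by
  unfold logistic
  positivity

theorem hasDerivAt_logistic (u : ℝ) :
    HasDerivAt logistic (logistic u * (1 - logistic u)) u := by
  have hden : Real.exp u + 1 ≠ 0 := by positivity
  refine ((Real.hasDerivAt_exp u).div ((Real.hasDerivAt_exp u).add_const 1) hden).congr_deriv ?_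
  unfold logistic
  field_simp

theorem hasDerivAt_neg_log_logistic (u : ℝ) :
    HasDerivAt (fun u => -Real.log (logistic u)) (logistic u - 1) u := by
  refine ((hasDerivAt_logistic u).log (logistic_pos u).ne').neg.congr_deriv ?_
  field_simp [(logistic_pos u).ne']
  ring

theorem monotone_div_four_sub_logistic : Monotone fun u => u / 4 - logistic u := by
  have hd : ∀ u, HasDerivAt (fun u => u / 4 - logistic u)
      (1 / 4 - logistic u * (1 - logistic u)) u := fun u =>
    ((hasDerivAt_id u).div_const 4).sub (hasDerivAt_logistic u)
  refine monotone_of_deriv_nonneg (fun u => (hd u).differentiableAt) fun u => ?_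
  rw [(hd u).deriv]
  nlinarith [sq_nonneg (logistic u - 1 / 2)]

theorem neg_log_logistic_le (u u₀ : ℝ) :
    -Real.log (logistic u) ≤
      -Real.log (logistic u₀) + (logistic u₀ - 1) * (u - u₀) + 1 / 8 * (u - u₀) ^ 2 := by
  have h := le_add_mul_sub_add_sq_of_monotone (L := 1 / 4) hasDerivAt_neg_log_logistic
    (by convert monotone_div_four_sub_logistic.add_const 1 using 2; ring) u u₀
  convert h using 2
  norm_num

/-- Tight per-observation surrogate bound. For q ∈ {-1,1} and
z₀ = x₀ + 4q(1 - π(q x₀)),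
-log(π(qx)) ≤ -log(π(qx₀)) + (1/8)((x - z₀)² - (x₀ - z₀)²), with equality
when x = x₀. -/
theorem per_observation_tight_surrogate_bound (q x x₀ : ℝ)
    (hq : q = -1 ∨ q = 1) :
    (-Real.log (logistic (q * x)) ≤
      -Real.log (logistic (q * x₀))
        + (1 / 8) * ((x - (x₀ + 4 * q * (1 - logistic (q * x₀)))) ^ 2
            - (x₀ - (x₀ + 4 * q * (1 - logistic (q * x₀)))) ^ 2)) ∧
    (x = x₀ →
      -Real.log (logistic (q * x)) =
        -Real.log (logistic (q * x₀))
          + (1 / 8) * ((x - (x₀ + 4 * q * (1 - logistic (q * x₀)))) ^ 2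
              - (x₀ - (x₀ + 4 * q * (1 - logistic (q * x₀)))) ^ 2)) := by
  refine ⟨(neg_log_logistic_le (q * x) (q * x₀)).trans_eq ?_, by rintro rfl; ring⟩
  rcases hq with rfl | rfl <;> ring
end
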